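/- arXiv:2510.26020 — 3 statements merged into one kernel-verified Lean document; each statement's English description precedes it below -/
import Mathlib

section
/- Consider a rollout tree with n trajectories (n a positive integer), a nonempty finite fork set F, for each fork phi in F a nonempty finite child set C(phi) of steps, with distinct forks having disjoint child sets so that each fork-child step c has a unique parent fork phi(c); for each fork-child step c let m(c) be a nonempty finite set of trajectory indices in {1,...,n} (the trajectories passing through c), with the sets m(c) for c in C(phi) pairwise disjoint for each phi; let T(c) be a nonempty finite token set and f(c,o) a real number for each o in T(c); and for each trajectory index k let |tau_k| be a positive real. Define omega_2(k,c) = (n * |tau_k|) / (|m(c)| * |T(c)| * |C(phi(c))| * |F|). Then (1/n) * sum over trajectories k in {1,...,n} of (1/|tau_k|) * sum over fork-child steps c with k in m(c) of sum over o in T(c) of omega_2(k,c) * f(c,o) equals (1/|F|) * sum over phi in F of (1/|C(phi)|) * sum over c in C(phi) of (1/|T(c)|) * sum over o in T(c) of f(c,o). -/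
/-- Central identity in Theorem 1: with the scaling
`ω₂(k,c) = (n * |τ_k|) / (|m(c)| * |T(c)| * |C(φ(c))| * |F|)`,
the trajectory-and-token-averaged sum of the scaled fork losses equals the fork-wise
empirical objective (average over forks, then children, then tokens). -/
theorem stmt_3 {Φ S O : Type*} [DecidableEq S]
    (n : ℕ) (hn : 0 < n)
    (F : Finset Φ) (hF : F.Nonempty)
    (C : Φ → Finset S) (hCne : ∀ φ ∈ F, (C φ).Nonempty)
    (hCdisj : ∀ φ₁ ∈ F, ∀ φ₂ ∈ F, φ₁ ≠ φ₂ → Disjoint (C φ₁) (C φ₂))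
    (parent : S → Φ) (hparent : ∀ φ ∈ F, ∀ c ∈ C φ, parent c = φ)
    (m : S → Finset ℕ)
    (hm : ∀ φ ∈ F, ∀ c ∈ C φ, (m c).Nonempty)
    (hmsub : ∀ φ ∈ F, ∀ c ∈ C φ, m c ⊆ Finset.range n)
    (hmdisj : ∀ φ ∈ F, ∀ c₁ ∈ C φ, ∀ c₂ ∈ C φ, c₁ ≠ c₂ → Disjoint (m c₁) (m c₂))
    (T : S → Finset O) (hT : ∀ φ ∈ F, ∀ c ∈ C φ, (T c).Nonempty)
    (τ : ℕ → ℝ) (hτ : ∀ k ∈ Finset.range n, 0 < τ k)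
    (f : S → O → ℝ)
    (ω₂ : ℕ → S → ℝ)
    (hω : ∀ k, ∀ c, ω₂ k c
      = ((n : ℝ) * τ k) /
          (((m c).card : ℝ) * ((T c).card : ℝ) * ((C (parent c)).card : ℝ) * (F.card : ℝ))) :
    (1 / (n : ℝ)) * ∑ k ∈ Finset.range n, (1 / τ k) *
        ∑ c ∈ (F.biUnion C).filter (fun c => k ∈ m c), ∑ o ∈ T c, ω₂ k c * f c o
      = (1 / (F.card : ℝ)) * ∑ φ ∈ F, (1 / ((C φ).card : ℝ)) *
          ∑ c ∈ C φ, (1 / ((T c).card : ℝ)) * ∑ o ∈ T c, f c o := by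
  classical
  have hFpos : (0:ℝ) < F.card := by exact_mod_cast hF.card_pos
  have hnpos : (0:ℝ) < n := by exact_mod_cast hn
  set g : S → ℝ := fun c =>
    ∑ o ∈ T c, ((n : ℝ) /
      (((m c).card : ℝ) * ((T c).card : ℝ) * ((C (parent c)).card : ℝ) * (F.card : ℝ))) * f c o
    with hg
  have step1 : ∀ k ∈ Finset.range n,
      (1 / τ k) * ∑ c ∈ (F.biUnion C).filter (fun c => k ∈ m c), ∑ o ∈ T c, ω₂ k c * f c o
      = ∑ c ∈ F.biUnion C, (if k ∈ m c then g c else 0) := by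
    intro k hk
    have hτk : τ k ≠ 0 := (hτ k hk).ne'
    rw [Finset.mul_sum, Finset.sum_filter]
    refine Finset.sum_congr rfl fun c _ => ?_
    by_cases h : k ∈ m c
    · simp only [h, if_true]
      rw [Finset.mul_sum, hg]
      refine Finset.sum_congr rfl fun o _ => ?_
      rw [hω, ← mul_assoc]
      congr 1
      rw [div_mul_div_comm, one_mul, mul_comm (n : ℝ) (τ k),
        mul_div_mul_left _ _ hτk]
    · simp [h]
  rw [Finset.sum_congr rfl step1, Finset.sum_comm]
  have step2 : ∀ c ∈ F.biUnion C,
      (∑ k ∈ Finset.range n, if k ∈ m c then g c else 0) = ((m c).card : ℝ) * g c := by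
    intro c hc
    obtain ⟨φ, hφ, hcφ⟩ := Finset.mem_biUnion.mp hc
    rw [← Finset.sum_filter]
    have : (Finset.range n).filter (fun k => k ∈ m c) = m c := by
      rw [Finset.filter_mem_eq_inter, Finset.inter_eq_right]
      exact hmsub φ hφ c hcφ
    rw [this, Finset.sum_const, nsmul_eq_mul]
  rw [Finset.sum_congr rfl step2,
    Finset.sum_biUnion (fun φ₁ h₁ φ₂ h₂ hne => hCdisj φ₁ h₁ φ₂ h₂ hne),
    Finset.mul_sum, Finset.mul_sum]
  refine Finset.sum_congr rfl fun φ hφ => ?_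
  rw [Finset.mul_sum, Finset.mul_sum, Finset.mul_sum]
  refine Finset.sum_congr rfl fun c hc => ?_
  have hpar : parent c = φ := hparent φ hφ c hc
  have hCpos : (0:ℝ) < (C φ).card := by exact_mod_cast (hCne φ hφ).card_pos
  have hTpos : (0:ℝ) < (T c).card := by exact_mod_cast (hT φ hφ c hc).card_pos
  have hmpos : (0:ℝ) < (m c).card := by exact_mod_cast (hm φ hφ c hc).card_pos
  simp only [hg, hpar, ← Finset.mul_sum]
  field_simp
end

section
/- Under the rollout-tree hypotheses of the coefficient identity (n trajectories with positive total lengths |tau_k|; nonempty finite fork set F; disjoint nonempty child sets C(phi) with unique parent forks; nonempty descendant sets m(c) pairwise disjoint within each fork; nonempty token sets), suppose each trajectory k traverses a finite set of steps S(k), each step c in S(k) has token set T(c), |tau_k| equals the total number of tokens over the steps of S(k), and the fork-child steps contained in S(k) are exactly the fork-child steps c with k in m(c). Let f_trj(c,o) and f_fork(c,o) be real-valued per-token losses, and set omega_1 = 1 and omega_2(k,c) = (n * |tau_k|) / (|m(c)| * |T(c)| * |C(phi(c))| * |F|). Then the combined empirical objective (1/n) * sum over k of (1/|tau_k|) * sum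 over steps c in S(k) and tokens o in T(c) of [ omega_1 * f_trj(c,o) + (if c is a fork-child and k is in m(c) then omega_2(k,c) * f_fork(c,o) else 0) ] equals the sum of the trajectory-level GRPO objective (1/n) * sum over k of (1/|tau_k|) * sum over c in S(k), o in T(c) of f_trj(c,o), plus the fork-wise GRPO objective (1/|F|) * sum over phi in F of (1/|C(phi)|) * sum over c in C(phi) of (1/|T(c)|) * sum over o in T(c) of f_fork(c,o). -/
/-- Empirical form of Theorem 1: with `ω₁ = 1` and
`ω₂(k,c) = (n * |τ_k|) / (|m(c)| * |T(c)| * |C(φ(c))| * |F|)`,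
the combined per-trajectory/per-token averaged objective decomposes exactly as the sum of
the trajectory-level GRPO objective and the fork-wise GRPO objective. -/
theorem stmt_4 {Φ S O : Type*} [DecidableEq S]
    (n : ℕ) (hn : 0 < n)
    (F : Finset Φ) (hF : F.Nonempty)
    (C : Φ → Finset S) (hCne : ∀ φ ∈ F, (C φ).Nonempty)
    (hCdisj : ∀ φ₁ ∈ F, ∀ φ₂ ∈ F, φ₁ ≠ φ₂ → Disjoint (C φ₁) (C φ₂))
    (parent : S → Φ) (hparent : ∀ φ ∈ F, ∀ c ∈ C φ, parent c = φ)
    (m : S → Finset ℕ)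
    (hm : ∀ φ ∈ F, ∀ c ∈ C φ, (m c).Nonempty)
    (hmsub : ∀ φ ∈ F, ∀ c ∈ C φ, m c ⊆ Finset.range n)
    (hmdisj : ∀ φ ∈ F, ∀ c₁ ∈ C φ, ∀ c₂ ∈ C φ, c₁ ≠ c₂ → Disjoint (m c₁) (m c₂))
    (T : S → Finset O)
    (Steps : ℕ → Finset S)
    (hTne : ∀ k ∈ Finset.range n, ∀ c ∈ Steps k, (T c).Nonempty)
    (hTforkne : ∀ φ ∈ F, ∀ c ∈ C φ, (T c).Nonempty)
    (τ : ℕ → ℝ) (hτpos : ∀ k ∈ Finset.range n, 0 < τ k)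
    (hτlen : ∀ k ∈ Finset.range n, τ k = ∑ c ∈ Steps k, ((T c).card : ℝ))
    (hSteps : ∀ k ∈ Finset.range n, ∀ c ∈ F.biUnion C, (c ∈ Steps k ↔ k ∈ m c))
    (f_trj f_fork : S → O → ℝ)
    (ω₁ : ℝ) (hω₁ : ω₁ = 1)
    (ω₂ : ℕ → S → ℝ)
    (hω₂ : ∀ k, ∀ c, ω₂ k c
      = ((n : ℝ) * τ k) /
          (((m c).card : ℝ) * ((T c).card : ℝ) * ((C (parent c)).card : ℝ) * (F.card : ℝ))) :
    (1 / (n : ℝ)) * ∑ k ∈ Finset.range n, (1 / τ k) *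
        ∑ c ∈ Steps k, ∑ o ∈ T c,
          (ω₁ * f_trj c o
            + (if c ∈ F.biUnion C ∧ k ∈ m c then ω₂ k c * f_fork c o else 0))
      = (1 / (n : ℝ)) * ∑ k ∈ Finset.range n, (1 / τ k) *
            ∑ c ∈ Steps k, ∑ o ∈ T c, f_trj c o
        + (1 / (F.card : ℝ)) * ∑ φ ∈ F, (1 / ((C φ).card : ℝ)) *
            ∑ c ∈ C φ, (1 / ((T c).card : ℝ)) * ∑ o ∈ T c, f_fork c o := by

  classical
  subst hω₁
  set B := F.biUnion C with hB
  have hFc : (F.card : ℝ) ≠ 0 :=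
    Nat.cast_ne_zero.mpr (Finset.card_pos.mpr hF).ne'
  have hnne : (n : ℝ) ≠ 0 := Nat.cast_ne_zero.mpr hn.ne'
  -- split the inner double sum for k ∈ range n
  have split : ∀ k ∈ Finset.range n, ∑ c ∈ Steps k, ∑ o ∈ T c,
      (1 * f_trj c o + (if c ∈ B ∧ k ∈ m c then ω₂ k c * f_fork c o else 0))
      = (∑ c ∈ Steps k, ∑ o ∈ T c, f_trj c o)
        + ∑ c ∈ B, (if k ∈ m c then ω₂ k c * ∑ o ∈ T c, f_fork c o else 0) := by
    intro k hk
    simp only [one_mul, Finset.sum_add_distrib]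
    congr 1
    have h1 : ∀ c, ∑ o ∈ T c,
        (if c ∈ B ∧ k ∈ m c then ω₂ k c * f_fork c o else 0)
        = (if c ∈ B ∧ k ∈ m c then ω₂ k c * ∑ o ∈ T c, f_fork c o else 0) := by
      intro c; split <;> simp [Finset.mul_sum]
    simp only [h1]
    rw [← Finset.sum_filter, ← Finset.sum_filter]
    apply Finset.sum_congr _ (fun c _ => rfl)
    ext c
    simp only [Finset.mem_filter]
    constructor
    · rintro ⟨hcS, hcB, hkm⟩; exact ⟨hcB, hkm⟩
    · rintro ⟨hcB, hkm⟩
      exact ⟨(hSteps k hk c hcB).2 hkm, hcB, hkm⟩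
  have expand : (1 / (n : ℝ)) * ∑ k ∈ Finset.range n, (1 / τ k) *
        ∑ c ∈ Steps k, ∑ o ∈ T c,
          (1 * f_trj c o + (if c ∈ B ∧ k ∈ m c then ω₂ k c * f_fork c o else 0))
      = (1 / (n : ℝ)) * ∑ k ∈ Finset.range n, (1 / τ k) *
            ∑ c ∈ Steps k, ∑ o ∈ T c, f_trj c o
        + (1 / (n : ℝ)) * ∑ k ∈ Finset.range n, (1 / τ k) *
            ∑ c ∈ B, (if k ∈ m c then ω₂ k c * ∑ o ∈ T c, f_fork c o else 0) := by
    rw [← mul_add, ← Finset.sum_add_distrib]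
    congr 1
    refine Finset.sum_congr rfl fun k hk => ?_
    rw [split k hk, mul_add]
  rw [expand]
  congr 1
  -- the fork term
  have swap : (1 / (n : ℝ)) * ∑ k ∈ Finset.range n, (1 / τ k) *
        ∑ c ∈ B, (if k ∈ m c then ω₂ k c * ∑ o ∈ T c, f_fork c o else 0)
      = ∑ c ∈ B, ∑ k ∈ m c,
          (1 / (n : ℝ)) * ((1 / τ k) * (ω₂ k c * ∑ o ∈ T c, f_fork c o)) := by
    rw [Finset.mul_sum]
    simp only [Finset.mul_sum, mul_ite, mul_zero]
    rw [Finset.sum_comm]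
    refine Finset.sum_congr rfl fun c hc => ?_
    rw [Finset.sum_ite_mem]
    obtain ⟨φ, hφ, hcφ⟩ := Finset.mem_biUnion.mp hc
    rw [Finset.inter_eq_right.mpr (hmsub φ hφ c hcφ)]
  rw [swap]
  have hdisj : (↑F : Set Φ).PairwiseDisjoint C := fun a ha b hb hab =>
    hCdisj a ha b hb hab
  rw [hB, Finset.sum_biUnion hdisj]
  rw [Finset.mul_sum]
  refine Finset.sum_congr rfl fun φ hφ => ?_
  rw [mul_left_comm, Finset.mul_sum, Finset.mul_sum]
  refine Finset.sum_congr rfl fun c hc => ?_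
  have hMc : ((m c).card : ℝ) ≠ 0 :=
    Nat.cast_ne_zero.mpr (Finset.card_pos.mpr (hm φ hφ c hc)).ne'
  have hTc : ((T c).card : ℝ) ≠ 0 :=
    Nat.cast_ne_zero.mpr (Finset.card_pos.mpr (hTforkne φ hφ c hc)).ne'
  have hCc : ((C φ).card : ℝ) ≠ 0 :=
    Nat.cast_ne_zero.mpr (Finset.card_pos.mpr (hCne φ hφ)).ne'
  have hterm : ∀ k ∈ m c,
      (1 / (n : ℝ)) * ((1 / τ k) * (ω₂ k c * ∑ o ∈ T c, f_fork c o))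
      = (1 / ((m c).card : ℝ)) * ((1 / (F.card : ℝ)) * ((1 / ((C φ).card : ℝ)) *
          ((1 / ((T c).card : ℝ)) * ∑ o ∈ T c, f_fork c o))) := by
    intro k hk
    have hkr : k ∈ Finset.range n := hmsub φ hφ c hc hk
    have hτ : τ k ≠ 0 := (hτpos k hkr).ne'
    rw [hω₂, hparent φ hφ c hc]
    field_simp
  rw [Finset.sum_congr rfl hterm, Finset.sum_const, nsmul_eq_mul]
  rw [← mul_assoc, mul_one_div, div_self hMc, one_mul]
  ring
end

section
/- Let Gamma be a real number with 0 < Gamma <= 1, let T_max be a natural number, and let gamma be a real number with Gamma <= gamma <= 1. Let d1 and d2 be natural numbers with d1 <= T_max and d2 <= T_max, and let fm1 and fm2 be real numbers in the closed interval [-Gamma^{T_max}/2, Gamma^{T_max}/2]. Then gamma^{d1} * 1 + fm1 > gamma^{d2} * (-1) + fm2. -/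
/-- With formatting rewards rescaled to `[-Γ^Tmax/2, Γ^Tmax/2]`, a step leading to a
correct final answer (outcome +1) always outscores a step leading to a wrong final
answer (outcome -1), regardless of their formatting rewards. -/
theorem stmt_5 (Γ : ℝ) (hΓ0 : 0 < Γ) (hΓ1 : Γ ≤ 1) (Tmax : ℕ)
    (γ : ℝ) (hγl : Γ ≤ γ) (hγu : γ ≤ 1)
    (d1 d2 : ℕ) (hd1 : d1 ≤ Tmax) (hd2 : d2 ≤ Tmax)
    (fm1 fm2 : ℝ)
    (hfm1 : fm1 ∈ Set.Icc (-(Γ ^ Tmax) / 2) (Γ ^ Tmax / 2))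
    (hfm2 : fm2 ∈ Set.Icc (-(Γ ^ Tmax) / 2) (Γ ^ Tmax / 2)) :
    γ ^ d1 * 1 + fm1 > γ ^ d2 * (-1) + fm2 := by
  obtain ⟨h1l, h1u⟩ := hfm1
  obtain ⟨h2l, h2u⟩ := hfm2
  have hγ0 : 0 < γ := lt_of_lt_of_le hΓ0 hγl
  have h1 : Γ ^ Tmax ≤ γ ^ d1 := by
    calc Γ ^ Tmax ≤ γ ^ Tmax := pow_le_pow_left₀ hΓ0.le hγl Tmax
    _ ≤ γ ^ d1 := pow_le_pow_of_le_one hγ0.le hγu hd1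
  have h2 : 0 < γ ^ d2 := pow_pos hγ0 d2
  nlinarith [pow_pos hΓ0 Tmax]
end
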